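/- Let X = {0,1}^ℕ with the product topology and for i ∈ {0,1} define f_i : X → X by f_i(ζ) = iζ if ζ_1 = i and f_i(ζ) = ζ_2ζ_3⋯ otherwise. Then every point of X is periodic of any given even period along some orbit: for every ζ ∈ X and every q ≥ 1, taking σ to be the periodic sequence (ζ_1^q (1−ζ_1)^q)^∞ (q copies of ζ_1 followed by q copies of 1−ζ_1, repeated), one has f_{σ_1⋯σ_{n+2q}}(ζ) = f_{σ_1⋯σ_n}(ζ) for all n ≥ 0 (with the convention that f applied along the empty word is the identity); in particular f_{σ_1⋯σ_{2qm}}(ζ) = ζ for all m ≥ 1. -/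
import Mathlib


/-- `applyWord F u x` is `f_u(x) = f_{u_n} ∘ ⋯ ∘ f_{u_1} (x)` for the word `u = u_1 ⋯ u_n`. -/
def applyWord {X : Type*} {k : ℕ} (F : Fin k → X → X) : List (Fin k) → X → X
  | [], x => x
  | a :: u, x => applyWord F u (F a x)

/-- Prepend the symbol `a` to the sequence `ξ`. -/
def prepend (a : Fin 2) (ξ : ℕ → Fin 2) : ℕ → Fin 2
  | 0 => a
  | n + 1 => ξ n

/-- `f_i(ζ) = iζ` if `ζ_1 = i`, and `f_i(ζ) = ζ_2ζ_3⋯` otherwise. -/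
def pushPop (i : Fin 2) (ζ : ℕ → Fin 2) : ℕ → Fin 2 :=
  if ζ 0 = i then prepend i ζ else fun n => ζ (n + 1)

/-- The complement of a binary symbol. -/
def flipSym (a : Fin 2) : Fin 2 := if a = 0 then 1 else 0

/-- The periodic sequence `(ζ_1^q (1-ζ_1)^q)^∞` (0-indexed). -/
def perSeq (ζ : ℕ → Fin 2) (q : ℕ) : ℕ → Fin 2 :=
  fun n => if n % (2 * q) < q then ζ 0 else flipSym (ζ 0)

/-- `a^j ζ`. -/
def repPre (j : ℕ) (ζ : ℕ → Fin 2) : ℕ → Fin 2 :=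
  fun m => if m < j then ζ 0 else ζ (m - j)

lemma repPre_zero (ζ : ℕ → Fin 2) : repPre 0 ζ = ζ := by
  funext m; simp [repPre]

lemma repPre_apply_zero (j : ℕ) (ζ : ℕ → Fin 2) : repPre j ζ 0 = ζ 0 := by
  unfold repPre; split <;> simp

lemma ne_flipSym (a : Fin 2) : a ≠ flipSym a := by fin_cases a <;> decide

lemma prepend_repPre (j : ℕ) (ζ : ℕ → Fin 2) :
    prepend (ζ 0) (repPre j ζ) = repPre (j + 1) ζ := by
  funext m
  cases m with
  | zero => simp [prepend, repPre]
  | succ m => simp [prepend, repPre, Nat.succ_lt_succ_iff, Nat.succ_sub_succ]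

lemma shift_repPre (j : ℕ) (ζ : ℕ → Fin 2) :
    (fun m => repPre (j + 1) ζ (m + 1)) = repPre j ζ := by
  funext m; simp [repPre, Nat.succ_lt_succ_iff, Nat.succ_sub_succ]

lemma pushPop_same (j : ℕ) (ζ : ℕ → Fin 2) :
    pushPop (ζ 0) (repPre j ζ) = repPre (j + 1) ζ := by
  rw [pushPop, if_pos (repPre_apply_zero j ζ)]
  exact prepend_repPre j ζ

lemma pushPop_flip (j : ℕ) (ζ : ℕ → Fin 2) :
    pushPop (flipSym (ζ 0)) (repPre (j + 1) ζ) = repPre j ζ := by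
  rw [pushPop, if_neg, shift_repPre]
  rw [repPre_apply_zero]
  exact ne_flipSym _

lemma applyWord_concat {X : Type*} {k : ℕ} (F : Fin k → X → X) (u : List (Fin k))
    (b : Fin k) (x : X) : applyWord F (u ++ [b]) x = F b (applyWord F u x) := by
  induction u generalizing x with
  | nil => rfl
  | cons a u ih => simp [applyWord, ih]

/-- Distance function: the current stack height after `n` steps. -/
def dst (q n : ℕ) : ℕ := if n % (2 * q) ≤ q then n % (2 * q) else 2 * q - n % (2 * q)

lemma key (ζ : ℕ → Fin 2) (q : ℕ) (hq : 1 ≤ q) (n : ℕ) :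
    applyWord pushPop (List.ofFn fun i : Fin n => perSeq ζ q i) ζ = repPre (dst q n) ζ := by
  induction n with
  | zero =>
    simp [applyWord, dst, repPre_zero, Nat.zero_mod]
  | succ n ih =>
    have h2q : 0 < 2 * q := by omega
    have hr : n % (2 * q) < 2 * q := Nat.mod_lt _ h2q
    have hsucc : (n + 1) % (2 * q) = (n % (2 * q) + 1) % (2 * q) := by
      rw [Nat.add_mod n 1, Nat.mod_eq_of_lt (show 1 < 2 * q by omega)]
    rw [List.ofFn_succ', List.concat_eq_append, applyWord_concat]
    simp only [Fin.coe_castSucc, Fin.val_last]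
    rw [ih]
    by_cases hlt : n % (2 * q) < q
    · have hper : perSeq ζ q n = ζ 0 := if_pos hlt
      have hdn : dst q n = n % (2 * q) := if_pos (le_of_lt hlt)
      have hmod : (n + 1) % (2 * q) = n % (2 * q) + 1 := by
        rw [hsucc, Nat.mod_eq_of_lt (by omega)]
      have hdn1 : dst q (n + 1) = n % (2 * q) + 1 := by
        rw [dst, hmod, if_pos (by omega)]
      rw [hper, hdn, hdn1, pushPop_same]
    · have hper : perSeq ζ q n = flipSym (ζ 0) := if_neg hlt
      have hdn : dst q n = 2 * q - n % (2 * q) := by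
        rw [dst]; split <;> omega
      have hj : dst q n = (2 * q - n % (2 * q) - 1) + 1 := by omega
      have hdn1 : dst q (n + 1) = 2 * q - n % (2 * q) - 1 := by
        by_cases hend : n % (2 * q) + 1 = 2 * q
        · have : (n + 1) % (2 * q) = 0 := by rw [hsucc, hend, Nat.mod_self]
          rw [dst, this, if_pos (by omega)]; omega
        · have hmod : (n + 1) % (2 * q) = n % (2 * q) + 1 := by
            rw [hsucc, Nat.mod_eq_of_lt (by omega)]
          rw [dst, hmod, if_neg (by omega)]
          omega
      rw [hper, hj, pushPop_flip, hdn1]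

/-- Every point of `{0,1}^ℕ` is periodic of any even period `2q` along the orbit
`σ = (ζ_1^q (1-ζ_1)^q)^∞`. -/
theorem stmt12 (ζ : ℕ → Fin 2) (q : ℕ) (hq : 1 ≤ q) :
    (∀ n : ℕ,
      applyWord pushPop (List.ofFn fun i : Fin (n + 2 * q) => perSeq ζ q i) ζ =
        applyWord pushPop (List.ofFn fun i : Fin n => perSeq ζ q i) ζ) ∧
    ∀ m : ℕ, 1 ≤ m →
      applyWord pushPop (List.ofFn fun i : Fin (2 * q * m) => perSeq ζ q i) ζ = ζ := by
  constructor
  · intro n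
    rw [key ζ q hq, key ζ q hq]
    have : dst q (n + 2 * q) = dst q n := by
      rw [dst, dst, Nat.add_mod_right]
    rw [this]
  · intro m hm
    rw [key ζ q hq]
    have : dst q (2 * q * m) = 0 := by
      rw [dst, Nat.mul_mod_right]
      simp
    rw [this, repPre_zero]
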